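/- Let S be a countable set, p₁ a probability mass function on S, and γ₁ : S → (0,∞). Fix r > 0 and t > 0 such that γ₁(z₁) ≠ t for every z₁ ∈ S. For σ > 0 define F_σ(t) = Σ_{z₁∈S} p₁(z₁)·Φ((r²/2 + σ²(log t − log γ₁(z₁)))/(σr)), where Φ is the standard normal CDF. Then lim_{σ→∞} F_σ(t) = Σ_{z₁∈S} p₁(z₁)·1{γ₁(z₁) ≤ t}; that is, as σ → ∞ the hybrid likelihood-ratio CDF converges pointwise (at non-atom points) to the discrete staircase CDF of the purely discrete Neyman–Pearson problem. -/

import Mathlib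

/-!
Away from the atoms, `log t - log γ₁ z ≠ 0`, so the argument of `Φ` behaves like
`σ (log t - log γ₁ z) / r` and tends to `+∞` or `-∞` according as `γ₁ z < t` or `γ₁ z > t`;
hence each term converges to `p₁ z · 1{γ₁ z ≤ t}`. Since `0 ≤ Φ ≤ 1`, the terms are dominated by
the summable `p₁`, and Tannery's theorem passes the limit through the sum.
-/

open MeasureTheory ProbabilityTheory

/-- The standard normal cumulative distribution function `Φ`. -/
noncomputable def stdNormalCDF (t : ℝ) : ℝ :=
  ((gaussianReal 0 1) (Set.Iic t)).toReal

open Filter Topology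

lemma stdNormalCDF_eq_cdf : stdNormalCDF = cdf (gaussianReal 0 1) := by
  ext x
  rw [cdf_eq_real, measureReal_def, stdNormalCDF]

lemma abs_stdNormalCDF_le_one (x : ℝ) : |stdNormalCDF x| ≤ 1 := by
  rw [stdNormalCDF_eq_cdf, abs_of_nonneg (cdf_nonneg _ x)]
  exact cdf_le_one _ x

lemma tendsto_tsum_mul_of_abs_le_one {α β : Type*} {l : Filter α} {p : β → ℝ}
    (hp : Summable fun z => |p z|) {f : α → β → ℝ} {g : β → ℝ}
    (hfg : ∀ z, Tendsto (f · z) l (𝓝 (g z))) (hf : ∀ x z, |f x z| ≤ 1) :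
    Tendsto (fun x => ∑' z, p z * f x z) l (𝓝 (∑' z, p z * g z)) :=
  tendsto_tsum_of_dominated_convergence hp (fun z => (hfg z).const_mul (p z)) <|
    .of_forall fun x z => by
      simpa only [Real.norm_eq_abs, abs_mul] using
        mul_le_of_le_one_right (abs_nonneg (p z)) (hf x z)

section QuadraticOverLinear

variable (a : ℝ) {c r : ℝ}

lemma add_sq_mul_div_mul_eventuallyEq (hr : r ≠ 0) :
    (fun σ : ℝ => (a + σ ^ 2 * c) / (σ * r)) =ᶠ[atTop] fun σ => a / (σ * r) + σ * (c / r) := by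
  filter_upwards [eventually_ne_atTop 0] with σ hσ
  field_simp

lemma tendsto_div_mul_atTop_nhds_zero (hr : 0 < r) :
    Tendsto (fun σ : ℝ => a / (σ * r)) atTop (𝓝 0) :=
  tendsto_const_nhds.div_atTop (tendsto_id.atTop_mul_const hr)

lemma tendsto_add_sq_mul_div_mul_atTop (hr : 0 < r) (hc : 0 < c) :
    Tendsto (fun σ : ℝ => (a + σ ^ 2 * c) / (σ * r)) atTop atTop :=
  (tendsto_congr' (add_sq_mul_div_mul_eventuallyEq a hr.ne')).2 <|
    (tendsto_div_mul_atTop_nhds_zero a hr).add_atTop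
      (tendsto_id.atTop_mul_const (div_pos hc hr))

lemma tendsto_add_sq_mul_div_mul_atBot (hr : 0 < r) (hc : c < 0) :
    Tendsto (fun σ : ℝ => (a + σ ^ 2 * c) / (σ * r)) atTop atBot :=
  (tendsto_congr' (add_sq_mul_div_mul_eventuallyEq a hr.ne')).2 <|
    (tendsto_div_mul_atTop_nhds_zero a hr).add_atBot
      (tendsto_id.atTop_mul_const_of_neg (div_neg_of_neg_of_pos hc hr))

lemma tendsto_stdNormalCDF_add_sq_mul_div_mul (hr : 0 < r) (hc : c ≠ 0) :
    Tendsto (fun σ : ℝ => stdNormalCDF ((a + σ ^ 2 * c) / (σ * r))) atTop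
      (𝓝 (if 0 < c then 1 else 0)) := by
  rw [stdNormalCDF_eq_cdf]
  rcases hc.lt_or_gt with hneg | hpos
  · rw [if_neg hneg.not_gt]
    exact (tendsto_cdf_atBot _).comp (tendsto_add_sq_mul_div_mul_atBot a hr hneg)
  · rw [if_pos hpos]
    exact (tendsto_cdf_atTop _).comp (tendsto_add_sq_mul_div_mul_atTop a hr hpos)

end QuadraticOverLinear

theorem hybrid_cdf_tendsto_discrete_staircase_general
    {S : Type*}
    (p₁ : S → ℝ) (hp₁nn : ∀ z, 0 ≤ p₁ z) (hp₁sum : ∑' z, p₁ z = 1)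
    (γ₁ : S → ℝ) (hγ₁ : ∀ z, 0 < γ₁ z)
    (r t : ℝ) (hr : 0 < r) (ht : 0 < t)
    (hne : ∀ z, γ₁ z ≠ t) :
    Filter.Tendsto
      (fun σ : ℝ => ∑' z₁, p₁ z₁ *
        stdNormalCDF ((r ^ 2 / 2 + σ ^ 2 * (Real.log t - Real.log (γ₁ z₁))) / (σ * r)))
      Filter.atTop
      (nhds (∑' z₁, p₁ z₁ * (if γ₁ z₁ ≤ t then (1 : ℝ) else 0))) := by
  have hsum : Summable fun z => |p₁ z| := by
    simp only [abs_of_nonneg (hp₁nn _)]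
    exact not_imp_comm.1 tsum_eq_zero_of_not_summable (hp₁sum ▸ one_ne_zero)
  have hlog_pos_iff (z : S) : 0 < Real.log t - Real.log (γ₁ z) ↔ γ₁ z ≤ t := by
    rw [sub_pos, Real.log_lt_log_iff (hγ₁ z) ht, (hne z).le_iff_lt]
  refine tendsto_tsum_mul_of_abs_le_one hsum (fun z => ?_) fun _ _ => abs_stdNormalCDF_le_one _
  have hlog_ne : Real.log t - Real.log (γ₁ z) ≠ 0 :=
    sub_ne_zero.2 fun h => hne z (Real.log_injOn_pos (hγ₁ z) ht h.symm)
  simpa only [hlog_pos_iff] using tendsto_stdNormalCDF_add_sq_mul_div_mul _ hr hlog_ne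

/-- **Recovery of the discrete certificate as `σ → ∞`.**
At any `t > 0` that is not an atom of the discrete likelihood ratio `γ₁`, the hybrid
likelihood-ratio CDF `F_σ(t) = Σ_{z₁} p₁(z₁)·Φ((r²/2 + σ²(log t − log γ₁(z₁)))/(σr))`
converges, as `σ → ∞`, to the discrete staircase `Σ_{z₁} p₁(z₁)·1{γ₁(z₁) ≤ t}`. -/
theorem hybrid_cdf_tendsto_discrete_staircase
    {S : Type*} [Countable S]
    (p₁ : S → ℝ) (hp₁nn : ∀ z, 0 ≤ p₁ z) (hp₁sum : ∑' z, p₁ z = 1)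
    (γ₁ : S → ℝ) (hγ₁ : ∀ z, 0 < γ₁ z)
    (r t : ℝ) (hr : 0 < r) (ht : 0 < t)
    (hne : ∀ z, γ₁ z ≠ t) :
    Filter.Tendsto
      (fun σ : ℝ => ∑' z₁, p₁ z₁ *
        stdNormalCDF ((r ^ 2 / 2 + σ ^ 2 * (Real.log t - Real.log (γ₁ z₁))) / (σ * r)))
      Filter.atTop
      (nhds (∑' z₁, p₁ z₁ * (if γ₁ z₁ ≤ t then (1 : ℝ) else 0))) :=
  hybrid_cdf_tendsto_discrete_staircase_general p₁ hp₁nn hp₁sum γ₁ hγ₁ r t hr ht hne
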